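/- Let A and B be self-dual complex two-forms on Minkowski space with invariants a, b and mixed invariant k. Then exp(A)·exp(B) = (cosh(a)·cosh(b) + k·SH(a)·SH(b))·I + SH(a)·cosh(b)·A + cosh(a)·SH(b)·B + (1/2)·SH(a)·SH(b)·[A,B]. -/

import Mathlib

open Matrix

noncomputable section

/-- The Minkowski metric matrix `diag(1,-1,-1,-1)`. -/
def minkEta : Matrix (Fin 4) (Fin 4) ℂ := Matrix.diagonal ![1, -1, -1, -1]

/-- The Levi-Civita symbol `ε(i,j,k,l)`: the sign of `(i,j,k,l)` as a permutation of
`(0,1,2,3)`, and `0` if the indices are not all distinct; `ε(0,1,2,3) = 1`. -/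
def eps (i j k l : Fin 4) : ℂ :=
  Matrix.det (Matrix.of ![Pi.single i 1, Pi.single j 1, Pi.single k 1, Pi.single l 1])

/-- A (complex) two-form on Minkowski space: `Fᵀ·η + η·F = 0`. -/
def IsTwoForm (F : Matrix (Fin 4) (Fin 4) ℂ) : Prop :=
  Fᵀ * minkEta + minkEta * F = 0

/-- The Hodge dual of a two-form:
`(*F)^μ_ν = (1/2)·Σ η_{μρ}·ε(ρ,ν,σ,τ)·F^σ_λ·η_{λτ}`. -/
def dual (F : Matrix (Fin 4) (Fin 4) ℂ) : Matrix (Fin 4) (Fin 4) ℂ :=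
  Matrix.of fun μ ν => (1/2 : ℂ) *
    ∑ ρ : Fin 4, ∑ σ : Fin 4, ∑ lam : Fin 4, ∑ τ : Fin 4,
      minkEta μ ρ * eps ρ ν σ τ * F σ lam * minkEta lam τ

/-- A self-dual complex two-form: a two-form with `*A = i·A`. -/
def SelfDual (A : Matrix (Fin 4) (Fin 4) ℂ) : Prop :=
  IsTwoForm A ∧ dual A = Complex.I • A

/-- An anti-self-dual complex two-form: a two-form with `*A = -i·A`. -/
def AntiSelfDual (A : Matrix (Fin 4) (Fin 4) ℂ) : Prop :=
  IsTwoForm A ∧ dual A = (-Complex.I) • A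

/-- A matrix with real entries. -/
def RealEntries (F : Matrix (Fin 4) (Fin 4) ℂ) : Prop :=
  ∀ i j, (F i j).im = 0

/-- `SH z = sinh z / z` for `z ≠ 0` and `SH 0 = 1`. -/
def SH (z : ℂ) : ℂ := if z = 0 then 1 else Complex.sinh z / z

/-! A self-dual two-form `A` is determined by its row `e = (A₀₁, A₀₂, A₀₃)`: `A = ∑ eᵢ • Eᵢ`
for three fixed matrices `Eᵢ` satisfying the Clifford relations `Eᵢ Eⱼ + Eⱼ Eᵢ = 2 δᵢⱼ`. Hence
for self-dual `A`, `B` the anticommutator `A B + B A` is the scalar `(1/2) tr (A B)`; in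
particular `A² = a²`, so the exponential series collapses to `exp A = cosh a + SH a • A`, and
multiplying the two closed forms, with `A B = k + (1/2) [A, B]`, gives the formula. -/

open Complex in
def selfDualBasis : Fin 3 → Matrix (Fin 4) (Fin 4) ℂ :=
  ![!![0, 1, 0, 0; 1, 0, 0, 0; 0, 0, 0, -I; 0, 0, I, 0],
    !![0, 0, 1, 0; 0, 0, 0, I; 1, 0, 0, 0; 0, -I, 0, 0],
    !![0, 0, 0, 1; 0, 0, -I, 0; 0, I, 0, 0; 1, 0, 0, 0]]

lemma selfDualBasis_mul_add_mul_swap (i j : Fin 3) :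
    selfDualBasis i * selfDualBasis j + selfDualBasis j * selfDualBasis i
      = (if i = j then 2 else 0 : ℂ) • 1 := by
  fin_cases i <;> fin_cases j <;> simp [selfDualBasis] <;> ext r c <;> fin_cases r <;>
    fin_cases c <;> norm_num

lemma sum_smul_selfDualBasis_mul_add_mul_swap (e f : Fin 3 → ℂ) :
    (∑ i, e i • selfDualBasis i) * (∑ j, f j • selfDualBasis j)
      + (∑ j, f j • selfDualBasis j) * (∑ i, e i • selfDualBasis i) = (2 * e ⬝ᵥ f) • 1 := by
  rw [Finset.sum_mul_sum, Finset.sum_mul_sum]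
  nth_rw 2 [Finset.sum_comm]
  simp_rw [← Finset.sum_add_distrib, smul_mul_smul_comm, mul_comm (f _) (e _), ← smul_add,
    selfDualBasis_mul_add_mul_swap, smul_smul, mul_ite, mul_zero, ite_smul, zero_smul,
    Finset.sum_ite_eq, Finset.mem_univ, if_true, ← Finset.sum_smul, dotProduct, Finset.mul_sum]
  exact congrArg (· • _) (Finset.sum_congr rfl fun _ _ => by ring)

lemma IsTwoForm.apply_add_apply {F : Matrix (Fin 4) (Fin 4) ℂ} (hF : IsTwoForm F) (i j : Fin 4) :
    F j i * minkEta j j + minkEta i i * F i j = 0 := by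
  simpa [minkEta, Matrix.mul_apply, Matrix.diagonal_apply] using congrFun₂ hF i j

lemma dual_apply (F : Matrix (Fin 4) (Fin 4) ℂ) (μ ν : Fin 4) :
    dual F μ ν = (1/2) * minkEta μ μ * ∑ σ, ∑ l, eps μ ν σ l * F σ l * minkEta l l := by
  simp [dual, minkEta, Matrix.diagonal_apply, Finset.mul_sum, mul_assoc, mul_left_comm]

lemma SelfDual.eq_sum_smul_selfDualBasis {A : Matrix (Fin 4) (Fin 4) ℂ} (hA : SelfDual A) :
    A = ∑ i : Fin 3, A 0 i.succ • selfDualBasis i := by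
  -- `η A` is antisymmetric, and self-duality expresses the spatial block of `A` through row `0`.
  obtain ⟨hform, hdual⟩ := hA
  have hsym := hform.apply_add_apply
  have hrow (j : Fin 4) : dual A 0 j = Complex.I * A 0 j := by rw [hdual]; rfl
  simp [Fin.forall_fin_succ, minkEta] at hsym
  simp [Fin.forall_fin_succ, dual_apply, minkEta, eps, Matrix.det_succ_row_zero,
    Fin.sum_univ_succ] at hrow
  ext i j
  fin_cases i <;> fin_cases j <;> simp [selfDualBasis, Fin.sum_univ_three] <;> grind

lemma SelfDual.mul_add_mul_swap {A B : Matrix (Fin 4) (Fin 4) ℂ} (hA : SelfDual A)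
    (hB : SelfDual B) : A * B + B * A = ((1/2) * trace (A * B)) • 1 := by
  have hanti : A * B + B * A
      = (2 * (fun i : Fin 3 => A 0 i.succ) ⬝ᵥ fun i => B 0 i.succ) • 1 := by
    conv_lhs => rw [hA.eq_sum_smul_selfDualBasis, hB.eq_sum_smul_selfDualBasis]
    exact sum_smul_selfDualBasis_mul_add_mul_swap _ _
  have htrace : 2 * trace (A * B) = trace (A * B + B * A) := by
    rw [trace_add, trace_mul_comm B A, two_mul]
  rw [hanti] at htrace ⊢
  simp only [trace_smul, trace_one, Fintype.card_fin, Nat.cast_ofNat, smul_eq_mul] at htrace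
  congr 1
  linear_combination (-1/4 : ℂ) * htrace

open scoped Nat in
lemma hasSum_SH (z : ℂ) : HasSum (fun n : ℕ => z ^ (2 * n) / ((2 * n + 1)! : ℂ)) (SH z) := by
  rcases eq_or_ne z 0 with rfl | hz
  · rw [SH, if_pos rfl]
    convert hasSum_ite_eq 0 (1 : ℂ) using 2 with n
    rcases eq_or_ne n 0 with rfl | hn <;> simp [*]
  · rw [SH, if_neg hz]
    refine ((Complex.hasSum_sinh z).div_const z).congr_fun fun n => ?_
    rw [pow_succ, mul_div_right_comm, mul_div_assoc, div_self hz, mul_one]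

theorem exp_eq_cosh_smul_one_add_SH_smul {𝔸 : Type*} [Ring 𝔸] [Algebra ℂ 𝔸] [TopologicalSpace 𝔸]
    [IsTopologicalRing 𝔸] [ContinuousSMul ℂ 𝔸] [T2Space 𝔸] {x : 𝔸} {c : ℂ}
    (h : x * x = c ^ 2 • 1) :
    NormedSpace.exp x = Complex.cosh c • 1 + SH c • x := by
  have hpow_even (n : ℕ) : x ^ (2 * n) = c ^ (2 * n) • 1 := by
    rw [pow_mul, pow_mul, sq, h, smul_pow, one_pow]
  rw [NormedSpace.exp_eq_tsum ℂ]
  refine HasSum.tsum_eq (HasSum.even_add_odd ?_ ?_)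
  · refine ((Complex.hasSum_cosh c).smul_const (1 : 𝔸)).congr_fun fun n => ?_
    rw [hpow_even, smul_smul, div_eq_inv_mul]
  · refine ((hasSum_SH c).smul_const x).congr_fun fun n => ?_
    rw [pow_succ, hpow_even, smul_one_mul, smul_smul, div_eq_inv_mul]

/-- Product of exponentials of two self-dual two-forms. -/
theorem selfDual_exp_mul_exp (A B : Matrix (Fin 4) (Fin 4) ℂ)
    (hA : SelfDual A) (hB : SelfDual B) (a b k : ℂ)
    (ha : a ^ 2 = (1/4 : ℂ) * Matrix.trace (A * A))
    (hb : b ^ 2 = (1/4 : ℂ) * Matrix.trace (B * B))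
    (hk : k = (1/4 : ℂ) * Matrix.trace (A * B)) :
    NormedSpace.exp A * NormedSpace.exp B
      = (Complex.cosh a * Complex.cosh b + k * SH a * SH b) • (1 : Matrix (Fin 4) (Fin 4) ℂ)
        + (SH a * Complex.cosh b) • A + (Complex.cosh a * SH b) • B
        + ((1/2 : ℂ) * SH a * SH b) • (A * B - B * A) := by
  have hAA : A * A = a ^ 2 • 1 := by
    rw [ha]
    linear_combination (norm := module) (1/2 : ℂ) • hA.mul_add_mul_swap hA
  have hBB : B * B = b ^ 2 • 1 := by
    rw [hb]
    linear_combination (norm := module) (1/2 : ℂ) • hB.mul_add_mul_swap hB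
  rw [exp_eq_cosh_smul_one_add_SH_smul hAA, exp_eq_cosh_smul_one_add_SH_smul hBB, hk]
  simp only [add_mul, mul_add, smul_mul_smul_comm, one_mul, mul_one]
  linear_combination (norm := module) ((1/2 : ℂ) * SH a * SH b) • hA.mul_add_mul_swap hB
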